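/- Let A>0 and suppose (n-1)π/A < R < nπ/A for some n ∈ ℕ. Then the equations k_1 = ±(A/2) cos(2k_1 R) e^{-2k_1 R tan(2k_1 R)} have exactly n simple solutions {k_{1,j}}_{j=1}^{n} with k_1 > 0 and tan(2k_1 R) > 0, and these satisfy k_{1,j} ∈ ((j-1)π/(2R), (2j-1)π/(4R)) for j = 1,…,n. -/

import Mathlib

/-!
In the variable `y = 2k₁R`, a positive solution with `tan y > 0` is a solution of
`y = AR · g(y)` with `g(y) = |cos y| e^{-y tan y}` lying in a branch `(jπ, jπ + π/2)` of
positivity of `tan`. On each branch `g` decreases strictly from `1` to `0`, so `y - AR · g(y)`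
increases strictly from `jπ - AR` to `jπ + π/2`: the branch carries exactly one solution when
`jπ < AR` and none otherwise, and `(n-1)π < AR < nπ` singles out the branches `j < n`.
-/

open Real Set

/-- The fixed-point equations `k₁ = ±(A/2) cos(2k₁R) e^{-2k₁R tan(2k₁R)}`. -/
def SolEq (A R x : ℝ) : Prop :=
  x = (A / 2) * Real.cos (2 * x * R) * Real.exp (-2 * x * R * Real.tan (2 * x * R)) ∨
  x = -((A / 2) * Real.cos (2 * x * R) * Real.exp (-2 * x * R * Real.tan (2 * x * R)))

def branch (j : ℕ) : Set ℝ := Ioo (j * π) (j * π + π / 2)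

noncomputable def cosDecay (y : ℝ) : ℝ := |cos y| * exp (-(y * tan y))

section Trigonometry

variable {y : ℝ} {j : ℕ}

lemma abs_cos_sub_nat_mul_pi (y : ℝ) (j : ℕ) : |cos (y - j * π)| = |cos y| := by
  simp [cos_sub_nat_mul_pi, abs_mul]

lemma exists_mem_branch_of_tan_pos (hy : 0 < y) (ht : 0 < tan y) : ∃ j, y ∈ branch j := by
  set j := ⌊y / π⌋₊
  have hjy : j * π ≤ y := (le_div_iff₀ pi_pos).1 (Nat.floor_le (by positivity))
  have hyj : y < j * π + π := by
    have := (div_lt_iff₀ pi_pos).1 (Nat.lt_floor_add_one (y / π))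
    linarith
  rw [← tan_sub_nat_mul_pi y j] at ht
  refine ⟨j, ?_, ?_⟩
  · by_contra! h
    have : y - j * π = 0 := by linarith
    simp [this] at ht
  · by_contra! h
    have : tan (y - j * π - π) ≤ 0 :=
      tan_nonpos_of_nonpos_of_neg_pi_div_two_le (by linarith) (by linarith)
    rw [tan_periodic.sub_eq] at this
    linarith

lemma eq_of_mem_branch {i : ℕ} (hi : y ∈ branch i) (hj : y ∈ branch j) : i = j := by
  have key : ∀ {a b : ℕ}, y ∈ branch a → y ∈ branch b → a ≤ b := by
    intro a b ha hb
    have : (a : ℝ) * π < (b + 1) * π := by linarith [ha.1, hb.2, pi_pos]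
    exact Nat.lt_succ_iff.1 (by exact_mod_cast lt_of_mul_lt_mul_right this pi_pos.le)
  exact le_antisymm (key hi hj) (key hj hi)

lemma tan_nonneg_of_mem_Icc (hy : y ∈ Icc (j * π) (j * π + π / 2)) : 0 ≤ tan y := by
  rw [← tan_sub_nat_mul_pi y j]
  exact tan_nonneg_of_nonneg_of_le_pi_div_two (by linarith [hy.1]) (by linarith [hy.2])

lemma tan_pos_of_mem_branch (hy : y ∈ branch j) : 0 < tan y := by
  rw [← tan_sub_nat_mul_pi y j]
  exact tan_pos_of_pos_of_lt_pi_div_two (by linarith [hy.1]) (by linarith [hy.2])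

lemma abs_cos_eq_cos_sub_of_mem_Icc (hy : y ∈ Icc (j * π) (j * π + π / 2)) :
    |cos y| = cos (y - j * π) := by
  rw [← abs_cos_sub_nat_mul_pi y j, abs_of_nonneg]
  exact cos_nonneg_of_mem_Icc ⟨by linarith [hy.1, pi_pos], by linarith [hy.2]⟩

end Trigonometry

section CosDecay

variable {y c : ℝ} {j : ℕ}

lemma cosDecay_nonneg (y : ℝ) : 0 ≤ cosDecay y := by
  unfold cosDecay; positivity

lemma cosDecay_le_abs_cos (hy : 0 ≤ y) (ht : 0 ≤ tan y) : cosDecay y ≤ |cos y| :=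
  mul_le_of_le_one_right (abs_nonneg _) (exp_le_one_iff.2 (by nlinarith))

lemma cosDecay_le_one (hy : 0 ≤ y) (ht : 0 ≤ tan y) : cosDecay y ≤ 1 :=
  (cosDecay_le_abs_cos hy ht).trans (abs_cos_le_one y)

lemma cosDecay_nat_mul_pi (j : ℕ) : cosDecay (j * π) = 1 := by
  simp [cosDecay, tan_nat_mul_pi, cos_nat_mul_pi]

lemma cosDecay_nat_mul_pi_add_pi_div_two (j : ℕ) : cosDecay (j * π + π / 2) = 0 := by
  rw [cosDecay, ← abs_cos_sub_nat_mul_pi _ j]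
  simp

lemma cosDecay_strictAntiOn (j : ℕ) : StrictAntiOn cosDecay (branch j) := by
  intro a ha b hb hab
  have hcos : |cos b| < |cos a| := by
    rw [abs_cos_eq_cos_sub_of_mem_Icc (Ioo_subset_Icc_self hb),
      abs_cos_eq_cos_sub_of_mem_Icc (Ioo_subset_Icc_self ha)]
    exact strictAntiOn_cos ⟨by linarith [ha.1], by linarith [ha.2, pi_pos]⟩
      ⟨by linarith [hb.1], by linarith [hb.2, pi_pos]⟩ (by linarith)
  have htan : tan a < tan b := by
    rw [← tan_sub_nat_mul_pi a j, ← tan_sub_nat_mul_pi b j]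
    exact strictMonoOn_tan ⟨by linarith [ha.1, pi_pos], by linarith [ha.2]⟩
      ⟨by linarith [hb.1, pi_pos], by linarith [hb.2]⟩ (by linarith)
  have hexp : exp (-(b * tan b)) < exp (-(a * tan a)) := by
    have : 0 ≤ a := by linarith [ha.1, (by positivity : (0 : ℝ) ≤ j * π)]
    have := tan_pos_of_mem_branch ha
    exact exp_lt_exp.2 (by nlinarith)
  exact mul_lt_mul'' hcos hexp (abs_nonneg _) (exp_pos _).le

lemma continuousOn_cosDecay (j : ℕ) : ContinuousOn cosDecay (Icc (j * π) (j * π + π / 2)) := by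
  intro y hy
  rcases hy.2.lt_or_eq with hlt | rfl
  · have hcos : cos y ≠ 0 := by
      rw [← abs_ne_zero, abs_cos_eq_cos_sub_of_mem_Icc hy]
      exact (cos_pos_of_mem_Ioo ⟨by linarith [hy.1, pi_pos], by linarith⟩).ne'
    exact (continuous_cos.continuousAt.abs.mul
      (continuousAt_id.mul (continuousAt_tan.2 hcos)).neg.rexp).continuousWithinAt
  · -- `cosDecay` vanishes at the right end, where Lean's `tan` takes the junk value `0`.
    rw [ContinuousWithinAt, cosDecay_nat_mul_pi_add_pi_div_two]
    have hbound : ∀ᶠ z in nhdsWithin (j * π + π / 2) (Icc (j * π) (j * π + π / 2)),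
        cosDecay z ≤ |cos z| := by
      filter_upwards [self_mem_nhdsWithin] with z hz
      exact cosDecay_le_abs_cos (by linarith [hz.1, (by positivity : (0 : ℝ) ≤ j * π)])
        (tan_nonneg_of_mem_Icc hz)
    refine squeeze_zero' (Filter.Eventually.of_forall cosDecay_nonneg) hbound ?_
    convert (continuous_cos.abs.tendsto _).mono_left nhdsWithin_le_nhds
    rw [← abs_cos_sub_nat_mul_pi _ j, add_sub_cancel_left, cos_pi_div_two, abs_zero]

lemma exists_eq_mul_cosDecay (hc : j * π < c) : ∃ y ∈ branch j, y = c * cosDecay y := by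
  have hcont : ContinuousOn (fun y => y - c * cosDecay y) (Icc (j * π) (j * π + π / 2)) :=
    continuousOn_id.sub (continuousOn_const.mul (continuousOn_cosDecay j))
  have hends : (0 : ℝ) ∈ Ioo (j * π - c * cosDecay (j * π))
      (j * π + π / 2 - c * cosDecay (j * π + π / 2)) := by
    rw [cosDecay_nat_mul_pi, cosDecay_nat_mul_pi_add_pi_div_two]
    constructor <;> linarith [pi_pos, (by positivity : (0 : ℝ) ≤ j * π)]
  obtain ⟨y, hy, hy0⟩ := intermediate_value_Ioo (by linarith [pi_pos]) hcont hends
  exact ⟨y, hy, sub_eq_zero.1 hy0⟩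

lemma strictMonoOn_sub_mul_cosDecay (hc : 0 ≤ c) (j : ℕ) :
    StrictMonoOn (fun y => y - c * cosDecay y) (branch j) := by
  intro a ha b hb hab
  have := mul_le_mul_of_nonneg_left (cosDecay_strictAntiOn j ha hb hab).le hc
  dsimp only
  linarith

lemma lt_of_eq_mul_cosDecay (hy : y ∈ branch j) (h : y = c * cosDecay y) : j * π < c := by
  have hy0 : 0 ≤ y := by linarith [hy.1, (by positivity : (0 : ℝ) ≤ j * π)]
  have h1 := cosDecay_le_one hy0 (tan_pos_of_mem_branch hy).le
  have hjπ : (0 : ℝ) ≤ j * π := by positivity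
  have hc : 0 < c := by
    by_contra! hc
    nlinarith [mul_nonpos_of_nonpos_of_nonneg hc (cosDecay_nonneg y), hy.1]
  linarith [mul_le_of_le_one_right hc.le h1, hy.1]

end CosDecay

lemma nat_mul_pi_lt_iff_lt {c : ℝ} {n : ℕ} (h1 : (n - 1) * π < c) (h2 : c < n * π) (j : ℕ) :
    j * π < c ↔ j < n := by
  constructor
  · intro h
    exact_mod_cast lt_of_mul_lt_mul_right (h.trans h2) pi_pos.le
  · intro h
    have : (j : ℝ) ≤ n - 1 := by
      rw [le_sub_iff_add_le]; exact_mod_cast h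
    nlinarith [pi_pos]

lemma solEq_iff {A R x : ℝ} (hA : 0 ≤ A) (hR : 0 < R) (hx : 0 ≤ x) :
    SolEq A R x ↔ 2 * x * R = A * R * cosDecay (2 * x * R) := by
  have habs : |A / 2 * cos (2 * x * R) * exp (-2 * x * R * tan (2 * x * R))| =
      A / 2 * cosDecay (2 * x * R) := by
    rw [cosDecay, abs_mul, abs_mul, abs_of_nonneg (by positivity : 0 ≤ A / 2),
      abs_of_pos (exp_pos _)]
    ring_nf
  have hsol : SolEq A R x ↔ |A / 2 * cos (2 * x * R) * exp (-2 * x * R * tan (2 * x * R))| = x := by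
    rw [SolEq, abs_eq hx]
    constructor <;> rintro (h | h) <;> [left; right; left; right] <;> linarith
  rw [hsol, habs]
  constructor
  · intro h
    linear_combination (-2 * R) * h
  · intro h
    refine mul_right_cancel₀ hR.ne' ?_
    linarith

lemma mem_Ioo_iff_mem_branch {R x : ℝ} (hR : 0 < R) (j : ℕ) :
    x ∈ Ioo (j * π / (2 * R)) ((2 * j + 1) * π / (4 * R)) ↔ 2 * x * R ∈ branch j := by
  simp only [branch, mem_Ioo, div_lt_iff₀ (by positivity : 0 < 2 * R),
    lt_div_iff₀ (by positivity : 0 < 4 * R)]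
  constructor <;> rintro ⟨h1, h2⟩ <;> constructor <;> linarith

/-- If `(n-1)π/A < R < nπ/A`, then the equations
`k₁ = ±(A/2)cos(2k₁R)e^{-2k₁R tan(2k₁R)}` have exactly `n` solutions with `k₁ > 0` and
`tan(2k₁R) > 0`, and the `j`-th solution lies in `((j-1)π/(2R), (2j-1)π/(4R))`
(indexing `j = 1, …, n`; here `j : Fin n` runs over `0, …, n-1`). -/
theorem exactly_n_solutions (A R : ℝ) (hA : 0 < A) (n : ℕ) (hn : 1 ≤ n)
    (hR1 : ((n : ℝ) - 1) * Real.pi / A < R) (hR2 : R < (n : ℝ) * Real.pi / A) :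
    ∃ k : Fin n → ℝ, Function.Injective k ∧
      (∀ j : Fin n,
        k j ∈ Set.Ioo ((j : ℝ) * Real.pi / (2 * R)) ((2 * (j : ℝ) + 1) * Real.pi / (4 * R))) ∧
      (∀ j : Fin n, 0 < k j ∧ 0 < Real.tan (2 * k j * R) ∧ SolEq A R (k j)) ∧
      (∀ x : ℝ, 0 < x → 0 < Real.tan (2 * x * R) → SolEq A R x → ∃ j : Fin n, x = k j) := by
  rw [div_lt_iff₀ hA, mul_comm R A] at hR1
  rw [lt_div_iff₀ hA, mul_comm R A] at hR2
  have hR : 0 < R := by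
    have : (1 : ℝ) ≤ n := by exact_mod_cast hn
    nlinarith [pi_pos]
  have hbranch := nat_mul_pi_lt_iff_lt hR1 hR2
  choose y hy hyc using fun j : Fin n => exists_eq_mul_cosDecay ((hbranch j).2 j.2)
  have hyR : ∀ j, 2 * (y j / (2 * R)) * R = y j := fun j => by field_simp
  have hy0 : ∀ j, 0 < y j := fun j => by linarith [(hy j).1, (by positivity : (0 : ℝ) ≤ j * π)]
  refine ⟨fun j => y j / (2 * R), fun i j hij => ?_, fun j => ?_, fun j => ⟨?_, ?_, ?_⟩, ?_⟩
  · have : y i = y j := by simpa [hR.ne'] using hij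
    exact Fin.ext (eq_of_mem_branch (hy i) (this ▸ hy j))
  · exact (mem_Ioo_iff_mem_branch hR j).2 ((hyR j).symm ▸ hy j)
  · exact div_pos (hy0 j) (by positivity)
  · exact (hyR j).symm ▸ tan_pos_of_mem_branch (hy j)
  · rw [solEq_iff hA.le hR (div_pos (hy0 j) (by positivity)).le, hyR]
    exact hyc j
  · intro x hx htan hsol
    rw [solEq_iff hA.le hR hx.le] at hsol
    obtain ⟨j, hj⟩ := exists_mem_branch_of_tan_pos (by positivity) htan
    have hjn : j < n := (hbranch j).1 (lt_of_eq_mul_cosDecay hj hsol)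
    refine ⟨⟨j, hjn⟩, ?_⟩
    have hxy : 2 * x * R = y ⟨j, hjn⟩ :=
      (strictMonoOn_sub_mul_cosDecay (mul_pos hA hR).le j).injOn hj (hy ⟨j, hjn⟩)
        (by linarith [hyc ⟨j, hjn⟩])
    show x = y _ / (2 * R)
    rw [← hxy]
    field_simp
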